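/- Let f : ℝ × ℝ^n → ℝ^n, g : ℝ × ℝ^n → ℝ^{n×m} and h : ℝ × ℝ^n → ℝ^m be infinitely differentiable, let σ ∈ ℕ^m with σ_i ≥ 1, and suppose that for each i ∈ {1,…,m}, L_g L_f^j h_i(t,x) = 0 for all (t,x) and all 0 ≤ j ≤ σ_i − 2. Let y_r : ℝ → ℝ^m and ν : I → ℝ^m be, respectively, infinitely differentiable and continuous, and assume the m×m matrix Γ_g(t,x), whose i-th row is L_g L_f^{σ_i−1} h_i(t,x), is invertible for all (t,x). Let x : I → ℝ^n be differentiable with ẋ(t) = f(t,x(t)) + g(t,x(t))u(t) for all t ∈ I, where u(t) := −Γ_g(t,x(t))^{-1}·( Γ_f(t,x(t)) − Γ_r(t) − ν(t) ), Γ_f(t,x) ∈ ℝ^m has i-th entry L_f^{σ_i} h_i(t,x), and Γ_r(t) ∈ ℝ^m has i-th entry y_{r,i}^{(σ_i)}(t). Then the tracking error E(t) := h(t,x(t)) − y_r(t) satisfies E_i^{(σ_i)}(t) = ν_i(t) for every i ∈ {1,…,m} and every t ∈ I. -/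

import Mathlib

noncomputable section

open Real MeasureTheory Finset

/-- One-step Lie derivative of a scalar function `ψ` along the time-varying vector field `f`:
`L_f ψ (t,x) = (∂ₓ ψ)(t,x) · f(t,x) + (∂ₜ ψ)(t,x)`, expressed as the total (Fréchet)
derivative of `ψ` in the direction `(1, f(t,x))`. -/
def lieF {n : ℕ} (f : ℝ × (Fin n → ℝ) → Fin n → ℝ) (ψ : ℝ × (Fin n → ℝ) → ℝ) :
    ℝ × (Fin n → ℝ) → ℝ :=
  fun p => fderiv ℝ ψ p (1, f p)

/-- Iterated Lie derivative `L_f^j ψ`, with `L_f^0 ψ = ψ`. -/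
def lieFIter {n : ℕ} (f : ℝ × (Fin n → ℝ) → Fin n → ℝ) (ψ : ℝ × (Fin n → ℝ) → ℝ)
    (j : ℕ) : ℝ × (Fin n → ℝ) → ℝ :=
  (lieF f)^[j] ψ

/-- Mixed Lie derivative `L_g ψ (t,x) = (∂ₓ ψ)(t,x) · g(t,x) ∈ ℝ^{1×m}` as a row vector;
the `i`-th component is the derivative of `ψ` in the (space) direction of the `i`-th
column of `g`. -/
def lieG {n m : ℕ} (g : ℝ × (Fin n → ℝ) → Fin n → Fin m → ℝ)
    (ψ : ℝ × (Fin n → ℝ) → ℝ) : ℝ × (Fin n → ℝ) → Fin m → ℝ :=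
  fun p i => fderiv ℝ ψ p (0, fun a => g p a i)

/-!
Along a closed-loop trajectory the chain rule gives
`d/dt L_f^j h_i(t, x(t)) = L_f^{j+1} h_i + (L_g L_f^j h_i) · u`.
For `j ≤ σ_i - 2` the second term vanishes, so on the open set `I` the `j`-th derivative of
`E_i` is `L_f^j h_i(t, x(t)) - y_{r,i}^{(j)}(t)` for all `j ≤ σ_i - 1`. At `j = σ_i - 1` the
term `(L_g L_f^{σ_i-1} h_i) · u` is the `i`-th row of `Γ_g u = -(Γ_f - Γ_r - ν)`, which
leaves exactly `ν_i`.
-/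

open Set

theorem eqOn_iteratedDerivWithin_of_hasDerivAt {𝕜 F : Type*} [NontriviallyNormedField 𝕜]
    [NormedAddCommGroup F] [NormedSpace 𝕜 F] {φ : 𝕜 → F} {s : Set 𝕜} (hs : IsOpen s)
    {D : ℕ → 𝕜 → F} {N : ℕ} (h0 : EqOn φ (D 0) s)
    (hD : ∀ j < N, ∀ x ∈ s, HasDerivAt (D j) (D (j + 1) x) x) :
    ∀ j ≤ N, EqOn (iteratedDerivWithin j φ s) (D j) s := by
  intro j hj
  induction j with
  | zero => rwa [iteratedDerivWithin_zero]
  | succ j ih =>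
    intro x hx
    have hj' : j < N := hj
    rw [iteratedDerivWithin_succ, derivWithin_of_isOpen hs hx,
      ((ih hj'.le).eventuallyEq_of_mem (hs.mem_nhds hx)).deriv_eq]
    exact (hD j hj' x hx).deriv

theorem ContDiff.hasDerivAt_iteratedDeriv {𝕜 F : Type*} [NontriviallyNormedField 𝕜]
    [NormedAddCommGroup F] [NormedSpace 𝕜 F] {φ : 𝕜 → F}
    (hφ : ContDiff 𝕜 (⊤ : ℕ∞) φ) (j : ℕ) (x : 𝕜) :
    HasDerivAt (iteratedDeriv j φ) (iteratedDeriv (j + 1) φ x) x := by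
  rw [iteratedDeriv_succ]
  exact (hφ.differentiable_iteratedDeriv j
    (by exact_mod_cast ENat.natCast_lt_top j)).differentiableAt.hasDerivAt

theorem Matrix.mulVec_nonsing_inv_mulVec {ι R : Type*} [Fintype ι] [DecidableEq ι] [CommRing R]
    {A : Matrix ι ι R} (hA : IsUnit A) (v : ι → R) : A.mulVec (A⁻¹.mulVec v) = v := by
  rw [Matrix.mulVec_mulVec, Matrix.mul_nonsing_inv _ ((Matrix.isUnit_iff_isUnit_det A).mp hA),
    Matrix.one_mulVec]

section LieDerivative

variable {n m : ℕ} {f : ℝ × (Fin n → ℝ) → Fin n → ℝ} {ψ : ℝ × (Fin n → ℝ) → ℝ}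

theorem lieFIter_succ (j : ℕ) : lieFIter f ψ (j + 1) = lieF f (lieFIter f ψ j) :=
  Function.iterate_succ_apply' _ _ _

theorem ContDiff.lieF (hψ : ContDiff ℝ (⊤ : ℕ∞) ψ) (hf : ContDiff ℝ (⊤ : ℕ∞) f) :
    ContDiff ℝ (⊤ : ℕ∞) (lieF f ψ) :=
  (hψ.fderiv_right le_rfl).clm_apply (contDiff_const.prodMk hf)

theorem ContDiff.lieFIter (hψ : ContDiff ℝ (⊤ : ℕ∞) ψ) (hf : ContDiff ℝ (⊤ : ℕ∞) f)
    (j : ℕ) : ContDiff ℝ (⊤ : ℕ∞) (lieFIter f ψ j) := by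
  induction j with
  | zero => exact hψ
  | succ j ih => rw [lieFIter_succ]; exact ih.lieF hf

theorem hasDerivAt_comp_trajectory {g : ℝ × (Fin n → ℝ) → Fin n → Fin m → ℝ}
    {x : ℝ → Fin n → ℝ} {u : Fin m → ℝ} {t : ℝ}
    (hψ : DifferentiableAt ℝ ψ (t, x t))
    (hx : HasDerivAt x (fun a => f (t, x t) a + ∑ k, g (t, x t) a k * u k) t) :
    HasDerivAt (fun s => ψ (s, x s)) (lieF f ψ (t, x t) + lieG g ψ (t, x t) ⬝ᵥ u) t := by
  have hvel : ((1 : ℝ), fun a => f (t, x t) a + ∑ k, g (t, x t) a k * u k)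
      = ((1 : ℝ), f (t, x t)) + ∑ k, u k • ((0 : ℝ), fun a => g (t, x t) a k) := by
    ext a
    · simp [Prod.fst_sum]
    · simp [Prod.snd_sum, Finset.sum_apply, mul_comm]
  refine (hψ.hasFDerivAt.comp_hasDerivAt t ((hasDerivAt_id t).prodMk hx)).congr_deriv ?_
  rw [hvel, map_add, map_sum]
  simp only [map_smul, smul_eq_mul, dotProduct, mul_comm]
  rfl

end LieDerivative

theorem feedback_linearisation_cancellation_general
    {n m : ℕ} (f : ℝ × (Fin n → ℝ) → Fin n → ℝ)
    (g : ℝ × (Fin n → ℝ) → Fin n → Fin m → ℝ)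
    (h : ℝ × (Fin n → ℝ) → Fin m → ℝ)
    (hf : ContDiff ℝ (⊤ : ℕ∞) f)
    (hh : ContDiff ℝ (⊤ : ℕ∞) h)
    (σ : Fin m → ℕ) (hσ : ∀ i, 1 ≤ σ i)
    (hzero : ∀ i : Fin m, ∀ j : ℕ, j + 2 ≤ σ i →
      ∀ p : ℝ × (Fin n → ℝ), lieG g (lieFIter f (fun q => h q i) j) p = 0)
    (yr : ℝ → Fin m → ℝ) (hyr : ContDiff ℝ (⊤ : ℕ∞) yr)
    (I : Set ℝ) (hI : IsOpen I)
    (ν : ℝ → Fin m → ℝ)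
    -- `Γ_g(t,x)`, whose `i`-th row is `L_g L_f^{σ_i - 1} h_i(t,x)`, is invertible everywhere
    (hΓ : ∀ p : ℝ × (Fin n → ℝ), IsUnit
      ((Matrix.of fun i a => lieG g (lieFIter f (fun q => h q i) (σ i - 1)) p a) :
        Matrix (Fin m) (Fin m) ℝ))
    (x : ℝ → Fin n → ℝ)
    -- the FBL controller `u = -Γ_g⁻¹ (Γ_f - Γ_r - ν)`
    (u : ℝ → Fin m → ℝ)
    (hu : ∀ t ∈ I, u t =
      -(((Matrix.of fun i a =>
            lieG g (lieFIter f (fun q => h q i) (σ i - 1)) (t, x t) a) :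
          Matrix (Fin m) (Fin m) ℝ)⁻¹).mulVec
        (fun i => lieFIter f (fun q => h q i) (σ i) (t, x t) -
          iteratedDeriv (σ i) (fun s => yr s i) t - ν t i))
    (hx : ∀ t ∈ I, HasDerivAt x
      (fun a => f (t, x t) a + ∑ i, g (t, x t) a i * u t i) t) :
    ∀ i : Fin m, ∀ t ∈ I, HasDerivAt
      (iteratedDerivWithin (σ i - 1) (fun s => h (s, x s) i - yr s i) I)
      (ν t i) t := by
  intro i t ht
  have hLie (j : ℕ) (s : ℝ) (hs : s ∈ I) := hasDerivAt_comp_trajectory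
    (((contDiff_pi.1 hh i).lieFIter hf j).differentiable (by simp) (s, x s)) (hx s hs)
  have hyri := contDiff_pi.1 hyr i
  set D : ℕ → ℝ → ℝ := fun j s =>
    lieFIter f (fun q => h q i) j (s, x s) - iteratedDeriv j (fun s => yr s i) s
  have hstep : ∀ j < σ i - 1, ∀ s ∈ I, HasDerivAt (D j) (D (j + 1) s) s := by
    intro j hj s hs
    refine ((hLie j s hs).sub (hyri.hasDerivAt_iteratedDeriv j s)).congr_deriv ?_
    simp [D, hzero i j (by omega), lieFIter_succ]
  have hcancel : lieG g (lieFIter f (fun q => h q i) (σ i - 1)) (t, x t) ⬝ᵥ u t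
      = -(lieFIter f (fun q => h q i) (σ i) (t, x t) -
          iteratedDeriv (σ i) (fun s => yr s i) t - ν t i) := by
    rw [hu t ht, dotProduct_neg]
    exact congrArg Neg.neg (congrFun (Matrix.mulVec_nonsing_inv_mulVec (hΓ (t, x t)) _) i)
  have htop : HasDerivAt (D (σ i - 1)) (ν t i) t := by
    refine ((hLie (σ i - 1) t ht).sub (hyri.hasDerivAt_iteratedDeriv _ t)).congr_deriv ?_
    rw [hcancel, ← lieFIter_succ, Nat.sub_add_cancel (hσ i)]
    ring
  have hE : EqOn (iteratedDerivWithin (σ i - 1) (fun s => h (s, x s) i - yr s i) I)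
      (D (σ i - 1)) I :=
    eqOn_iteratedDerivWithin_of_hasDerivAt hI (fun s _ => by simp [D, lieFIter]) hstep _ le_rfl
  exact htop.congr_of_eventuallyEq (hE.eventuallyEq_of_mem (hI.mem_nhds ht))

/-- **Feedback-linearisation cancellation (Eqs. (21)-(22) of the paper).**
With the controller `u = -Γ_g⁻¹(Γ_f - Γ_r - ν)`, the tracking error
`E_i(t) = h_i(t,x(t)) - y_{r,i}(t)` satisfies `E_i^{(σ_i)}(t) = ν_i(t)` on `I`. -/
theorem feedback_linearisation_cancellation
    {n m : ℕ} (f : ℝ × (Fin n → ℝ) → Fin n → ℝ)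
    (g : ℝ × (Fin n → ℝ) → Fin n → Fin m → ℝ)
    (h : ℝ × (Fin n → ℝ) → Fin m → ℝ)
    (hf : ContDiff ℝ (⊤ : ℕ∞) f) (hg : ContDiff ℝ (⊤ : ℕ∞) g)
    (hh : ContDiff ℝ (⊤ : ℕ∞) h)
    (σ : Fin m → ℕ) (hσ : ∀ i, 1 ≤ σ i)
    (hzero : ∀ i : Fin m, ∀ j : ℕ, j + 2 ≤ σ i →
      ∀ p : ℝ × (Fin n → ℝ), lieG g (lieFIter f (fun q => h q i) j) p = 0)
    (yr : ℝ → Fin m → ℝ) (hyr : ContDiff ℝ (⊤ : ℕ∞) yr)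
    (I : Set ℝ) (hI : IsOpen I) (hI' : I.OrdConnected)
    (ν : ℝ → Fin m → ℝ) (hν : ContinuousOn ν I)
    -- `Γ_g(t,x)`, whose `i`-th row is `L_g L_f^{σ_i - 1} h_i(t,x)`, is invertible everywhere
    (hΓ : ∀ p : ℝ × (Fin n → ℝ), IsUnit
      ((Matrix.of fun i a => lieG g (lieFIter f (fun q => h q i) (σ i - 1)) p a) :
        Matrix (Fin m) (Fin m) ℝ))
    (x : ℝ → Fin n → ℝ)
    -- the FBL controller `u = -Γ_g⁻¹ (Γ_f - Γ_r - ν)`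
    (u : ℝ → Fin m → ℝ)
    (hu : ∀ t ∈ I, u t =
      -(((Matrix.of fun i a =>
            lieG g (lieFIter f (fun q => h q i) (σ i - 1)) (t, x t) a) :
          Matrix (Fin m) (Fin m) ℝ)⁻¹).mulVec
        (fun i => lieFIter f (fun q => h q i) (σ i) (t, x t) -
          iteratedDeriv (σ i) (fun s => yr s i) t - ν t i))
    (hx : ∀ t ∈ I, HasDerivAt x
      (fun a => f (t, x t) a + ∑ i, g (t, x t) a i * u t i) t) :
    ∀ i : Fin m, ∀ t ∈ I, HasDerivAt
      (iteratedDerivWithin (σ i - 1) (fun s => h (s, x s) i - yr s i) I)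
      (ν t i) t :=
  feedback_linearisation_cancellation_general f g h hf hh σ hσ hzero yr hyr I hI ν hΓ x u hu hx
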